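/- Let X be a real linear Polish space and V ⊆ X a D-measurable, midpoint convex set symmetric about the origin for which 0 is a ℚ₂-internal point. Then V is a neighborhood of 0 (i.e. 0 is an interior point of V). -/

import Mathlib

open Set Pointwise MeasureTheory

/-- A set is Haar meager (Darji) if it is contained in a Borel set `B` such that some
continuous map from a nonempty compact metric space pulls back every translate of `B`
to a meager set. -/
def HaarMeager {X : Type*} [AddCommGroup X] [TopologicalSpace X] (A : Set X) : Prop :=
  ∃ B : Set X, A ⊆ B ∧ MeasurableSet[borel X] B ∧
    ∃ (K : Type) (_ : MetricSpace K) (_ : CompactSpace K) (_ : Nonempty K) (f : K → X),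
      Continuous f ∧ ∀ x : X, IsMeagre (f ⁻¹' (B + {x}))

/-- A set is D-measurable if it is the union of a Borel set and a Haar meager set. -/
def DMeasurable {X : Type*} [AddCommGroup X] [TopologicalSpace X] (A : Set X) : Prop :=
  ∃ B M : Set X, MeasurableSet[borel X] B ∧ HaarMeager M ∧ A = B ∪ M

/-- Dyadic rationals. -/
def Q2 : Set ℝ := {ρ | ∃ n m : ℤ, ρ = (n : ℝ) / 2 ^ m}

/-- `x₀` is a `ℚ₂`-internal point of `V`. -/
def Q2Internal {X : Type*} [AddCommGroup X] [Module ℝ X] (V : Set X) (x₀ : X) : Prop :=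
  x₀ ∈ V ∧ ∀ x : X, ∃ ε > (0 : ℝ), ∀ ρ ∈ Q2, ρ ∈ Set.Ioo (-ε) ε → x₀ + ρ • x ∈ V

/-!
Haar meager sets in a Polish group are meager (Darji): if `f : K → X` witnesses that `B` is
Haar meager, every vertical section of `E = {(x, k) | f k + x ∈ B}` is meager, so `E` is meager
by Kuratowski–Ulam, and then some horizontal section, a translate of `B`, is meager. Hence a
D-measurable set has the Baire property. As `0` is `ℚ₂`-internal, `X = ⋃ₘ 2ᵐ • V`, so `V` is
not meager and Pettis' theorem gives `V - V ∈ 𝓝 0`; midpoint convexity and symmetry give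
`(1 / 2) • (V - V) ⊆ V`.
-/

open Topology Filter TopologicalSpace

theorem BaireMeasurableSet.exists_isOpen_nonempty_isMeagre_diff {α : Type*}
    [TopologicalSpace α] {A : Set α} (hA : BaireMeasurableSet A) (hA' : ¬IsMeagre A) :
    ∃ U, IsOpen U ∧ U.Nonempty ∧ IsMeagre (U \ A) := by
  obtain ⟨U, hUo, hAU⟩ := hA.residualEq_isOpen
  set D := {p | ¬(p ∈ A ↔ p ∈ U)}
  have hD : IsMeagre D := (eventuallyEq_set.1 hAU).mono fun _ hp hnot => hnot hp
  refine ⟨U, hUo, nonempty_iff_ne_empty.2 fun hU => hA' (hD.mono fun p hp => ?_),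
    hD.mono fun p hp => show p ∈ D from fun hiff => hp.2 (hiff.2 hp.1)⟩
  exact fun hiff => by simpa [hU] using hiff.1 hp

section KuratowskiUlam

variable {X Y : Type*} [TopologicalSpace X] [TopologicalSpace Y] [SecondCountableTopology Y]

theorem IsOpen.eventually_residual_dense_prodMk_preimage {W : Set (X × Y)} (hWo : IsOpen W)
    (hWd : Dense W) : ∀ᶠ x in residual X, Dense (Prod.mk x ⁻¹' W) := by
  have hbasis := isBasis_countableBasis Y
  have hmeets : ∀ V ∈ countableBasis Y,
      ∀ᶠ x in residual X, V.Nonempty → (V ∩ Prod.mk x ⁻¹' W).Nonempty := by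
    intro V hV
    rcases V.eq_empty_or_nonempty with rfl | hVne
    · simp
    have hopen : IsOpen {x | (V ∩ Prod.mk x ⁻¹' W).Nonempty} := by
      convert isOpenMap_fst _ (hWo.inter (isOpen_univ.prod (hbasis.isOpen hV))) using 1
      ext x
      simp only [mem_ofPred_eq, mem_image, mem_inter_iff, mem_prod, mem_univ, true_and,
        Prod.exists, exists_and_right, exists_eq_right]
      exact exists_congr fun y => and_comm
    refine mem_of_superset (residual_of_dense_open hopen ?_) fun x hx _ => hx
    refine dense_iff_inter_open.2 fun G hGo hGne => ?_
    obtain ⟨p, ⟨hpG, hpV⟩, hpW⟩ :=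
      hWd.inter_open_nonempty (G ×ˢ V) (hGo.prod (hbasis.isOpen hV)) (hGne.prod hVne)
    exact ⟨p.1, hpG, p.2, hpV, hpW⟩
  filter_upwards [(eventually_countable_ball (countable_countableBasis Y)).2 hmeets]
    with x hx
  exact hbasis.dense_iff.2 hx

theorem IsMeagre.eventually_residual_isMeagre_prodMk_preimage {E : Set (X × Y)}
    (hE : IsMeagre E) : ∀ᶠ x in residual X, IsMeagre (Prod.mk x ⁻¹' E) := by
  obtain ⟨S, hSo, hSd, hSc, hSE⟩ := mem_residual_iff.1 hE
  filter_upwards [(eventually_countable_ball hSc).2 fun W hW =>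
    (hSo W hW).eventually_residual_dense_prodMk_preimage (hSd W hW)] with x hx
  refine mem_of_superset ((countable_bInter_mem hSc).2 fun W hW =>
    residual_of_dense_open ((hSo W hW).preimage (by fun_prop)) (hx W hW)) fun y hy => ?_
  exact hSE (mem_sInter.2 fun W hW => mem_iInter₂.1 hy W hW)

theorem BaireMeasurableSet.isMeagre_of_forall_isMeagre_prodMk_preimage [BaireSpace X]
    [BaireSpace Y] {E : Set (X × Y)} (hE : BaireMeasurableSet E)
    (h : ∀ x, IsMeagre (Prod.mk x ⁻¹' E)) : IsMeagre E := by
  by_contra hE'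
  obtain ⟨U, hUo, ⟨⟨x₀, y₀⟩, hp⟩, hUE⟩ := hE.exists_isOpen_nonempty_isMeagre_diff hE'
  obtain ⟨G, V, hGo, hVo, hxG, hyV, hGVU⟩ := isOpen_prod_iff.1 hUo x₀ y₀ hp
  obtain ⟨x, hxG', hxUE⟩ := (dense_of_mem_residual
    hUE.eventually_residual_isMeagre_prodMk_preimage).inter_open_nonempty G hGo ⟨x₀, hxG⟩
  have hVE : V ⊆ Prod.mk x ⁻¹' E ∪ Prod.mk x ⁻¹' (U \ E) := fun y hy =>
    em' _ |>.symm.imp id fun hxy => ⟨hGVU ⟨hxG', hy⟩, hxy⟩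
  exact not_isMeagre_of_isOpen hVo ⟨y₀, hyV⟩ (((h x).union hxUE).mono hVE)

end KuratowskiUlam

/-- Darji's theorem. -/
theorem HaarMeager.isMeagre {X : Type*} [AddCommGroup X] [TopologicalSpace X]
    [IsTopologicalAddGroup X] [PolishSpace X] {A : Set X} (hA : HaarMeager A) : IsMeagre A := by
  obtain ⟨B, hAB, hB, K, _, _, _, f, hf, hfB⟩ := hA
  set E : Set (X × K) := {p | f p.2 + p.1 ∈ B}
  have hE : BaireMeasurableSet E := by
    borelize X (X × K)
    exact (((hf.comp continuous_snd).add continuous_fst).measurable hB).baireMeasurableSet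
  have hEx : ∀ x, IsMeagre (Prod.mk x ⁻¹' E) := fun x => by
    convert hfB (-x) using 1
    ext k
    simp [E, Set.add_singleton, ← sub_eq_add_neg, sub_eq_iff_eq_add]
  have hE' : IsMeagre (Prod.swap ⁻¹' E : Set (K × X)) :=
    (hE.isMeagre_of_forall_isMeagre_prodMk_preimage hEx).preimage_of_isOpenMap
      continuous_swap (Homeomorph.prodComm K X).isOpenMap
  obtain ⟨k, hk⟩ := (dense_of_mem_residual
    hE'.eventually_residual_isMeagre_prodMk_preimage).nonempty
  refine IsMeagre.mono hAB ?_
  convert hk.preimage_of_isOpenMap (continuous_sub_right (f k)) (isOpenMap_sub_right (f k))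
  ext x
  simp [E]

/-- Pettis' theorem. -/
theorem BaireMeasurableSet.sub_self_mem_nhds_zero {G : Type*} [AddCommGroup G]
    [TopologicalSpace G] [IsTopologicalAddGroup G] [BaireSpace G] {A : Set G}
    (hA : BaireMeasurableSet A) (hA' : ¬IsMeagre A) : A - A ∈ 𝓝 (0 : G) := by
  obtain ⟨U, hUo, ⟨u, hu⟩, hM⟩ := hA.exists_isOpen_nonempty_isMeagre_diff hA'
  filter_upwards [(hUo.preimage (continuous_const_add u)).mem_nhds (by simpa using hu)] with z hz
  -- A generic point `y` of the open set `U ∩ (U - z) ∋ u` has both `y` and `y + z` in `A`.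
  set M := U \ A ∪ (· + z) ⁻¹' (U \ A)
  have hW : IsOpen (U ∩ (· + z) ⁻¹' U) := hUo.inter (hUo.preimage (continuous_add_const z))
  have hMz : IsMeagre M :=
    hM.union (hM.preimage_of_isOpenMap (continuous_add_const z) (isOpenMap_add_right z))
  obtain ⟨y, ⟨hyU, hyzU⟩, hyM⟩ : ((U ∩ (· + z) ⁻¹' U) \ M).Nonempty :=
    nonempty_of_not_isMeagre fun h =>
      not_isMeagre_of_isOpen hW ⟨u, hu, hz⟩ ((hMz.union h).mono (sdiff_subset_iff.1 subset_rfl))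
  exact ⟨y + z, not_not.1 fun h => hyM (.inr ⟨hyzU, h⟩),
    y, not_not.1 fun h => hyM (.inl ⟨hyU, h⟩), add_sub_cancel_left y z⟩

theorem Q2Internal.not_isMeagre {X : Type*} [AddCommGroup X] [Module ℝ X]
    [TopologicalSpace X] [ContinuousConstSMul ℝ X] [BaireSpace X] {V : Set X}
    (h0 : Q2Internal V 0) : ¬IsMeagre V := by
  intro hV
  have hcover : ⋃ m : ℕ, (((2 : ℝ) ^ m)⁻¹ • ·) ⁻¹' V = univ := by
    refine eq_univ_of_forall fun x => mem_iUnion.2 ?_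
    obtain ⟨ε, hε, hρ⟩ := h0.2 x
    obtain ⟨m, hm⟩ := exists_pow_lt_of_lt_one hε (by norm_num : (2 : ℝ)⁻¹ < 1)
    have hpos : (0 : ℝ) < ((2 : ℝ) ^ m)⁻¹ := by positivity
    have hx := hρ ((2 : ℝ) ^ m)⁻¹ ⟨1, m, by simp⟩ ⟨by linarith, by rwa [← inv_pow]⟩
    exact ⟨m, by simpa using hx⟩
  refine not_isMeagre_of_isOpen (isOpen_univ (X := X)) univ_nonempty ?_
  rw [← hcover]
  exact isMeagre_iUnion fun m => hV.preimage_of_isOpenMap (continuous_const_smul _)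
    (isOpenMap_smul₀ (by positivity))

theorem DMeasurable.baireMeasurableSet {X : Type*} [AddCommGroup X] [TopologicalSpace X]
    [IsTopologicalAddGroup X] [PolishSpace X] {A : Set X} (hA : DMeasurable A) :
    BaireMeasurableSet A := by
  obtain ⟨B, M, hB, hM, rfl⟩ := hA
  borelize X
  exact hB.baireMeasurableSet.union hM.isMeagre.baireMeasurableSet

theorem one_half_smul_sub_self_subset {E : Type*} [AddCommGroup E] [Module ℝ E] {V : Set E}
    (hmid : ∀ v₁ ∈ V, ∀ v₂ ∈ V, (1 / 2 : ℝ) • (v₁ + v₂) ∈ V) (hsym : V = -V) :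
    (1 / 2 : ℝ) • (V - V) ⊆ V := by
  rintro _ ⟨_, ⟨v₁, h₁, v₂, h₂, rfl⟩, rfl⟩
  rw [hsym] at h₂
  simpa [sub_eq_add_neg] using hmid v₁ h₁ (-v₂) h₂

theorem mem_nhds_zero_of_q2Internal
    (X : Type*) [AddCommGroup X] [Module ℝ X] [TopologicalSpace X]
    [IsTopologicalAddGroup X] [ContinuousSMul ℝ X] [PolishSpace X]
    (V : Set X) (hV : DMeasurable V)
    (hmid : ∀ v₁ ∈ V, ∀ v₂ ∈ V, (1 / 2 : ℝ) • (v₁ + v₂) ∈ V)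
    (hsym : V = -V) (h0 : Q2Internal V 0) :
    V ∈ nhds (0 : X) := by
  have hVV : V - V ∈ 𝓝 (0 : X) :=
    hV.baireMeasurableSet.sub_self_mem_nhds_zero h0.not_isMeagre
  exact mem_of_superset ((set_smul_mem_nhds_zero_iff (by norm_num)).2 hVV)
    (one_half_smul_sub_self_subset hmid hsym)
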